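/- Let a, b, c ∈ ℝ with (b,c) ≠ (0,0), a² < b² + c², and b² + c² < 1 + a². Set n = √(a² + b² + c²), α = arctan(a/√(b² + c²)) (so that sin α = a/n and cos α = √(b² + c²)/n), let λ satisfy cos λ = b/√(b² + c²) and sin λ = c/√(b² + c²), set k = √(cos 2α) = √(b² + c² − a²)/n, and s = artanh(n·k)/k (well defined since n·k = √(b² + c² − a²) < 1). Then (tanh(s·k)/k)·(sin α, cos α·cos λ, cos α·sin λ) = (a, b, c); i.e., the H²-like translation curve of the SL(2,ℝ)-tilde geometry with parameters (α, λ) passes through the point with coordinates (a,b,c) at translation arc-length parameter s. -/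

import Mathlib

open Real

/-- The inverse hyperbolic tangent, `artanh x = ½·log((1+x)/(1−x))`. -/
noncomputable def artanh (x : ℝ) : ℝ := (1 / 2) * Real.log ((1 + x) / (1 - x))

/-!
Writing `r = √(b² + c²)`, the angle `α = arctan (a / r)` has `sin α = a / n`, `cos α = r / n`
and `cos 2α = (r² - a²) / n²`, so `n k = √(b² + c² - a²) ∈ (0, 1)`. Hence `tanh (s k) = n k`,
the curve sits at distance `tanh (s k) / k = n` from the origin in the direction
`(a, b, c) / n`, and so it reaches `(a, b, c)`.
-/

open Set

theorem tanh_artanh_of_mem_Ioo {x : ℝ} (hx : x ∈ Ioo (-1) 1) : tanh (_root_.artanh x) = x := by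
  rw [_root_.artanh, ← Real.artanh_eq_half_log (Ioo_subset_Icc_self hx), Real.tanh_artanh hx]

theorem tanh_artanh_mul_div_mul_div {n k : ℝ} (hk : 0 < k) (hnk : n * k ∈ Ioo (-1) 1) :
    tanh (_root_.artanh (n * k) / k * k) / k = n := by
  rw [div_mul_cancel₀ _ hk.ne', tanh_artanh_of_mem_Ioo hnk, mul_div_cancel_right₀ _ hk.ne']

section ArctanDiv

variable (a : ℝ) {r : ℝ}

theorem sqrt_one_add_div_sq (hr : 0 < r) : √(1 + (a / r) ^ 2) = √(a ^ 2 + r ^ 2) / r := by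
  rw [← sqrt_sq hr.le, ← sqrt_div' _ (sq_nonneg r), sqrt_sq hr.le]
  congr 1
  field_simp
  ring

theorem sin_arctan_div (hr : 0 < r) : sin (arctan (a / r)) = a / √(a ^ 2 + r ^ 2) := by
  rw [sin_arctan, sqrt_one_add_div_sq a hr, div_div_div_cancel_right₀ hr.ne']

theorem cos_arctan_div (hr : 0 < r) : cos (arctan (a / r)) = r / √(a ^ 2 + r ^ 2) := by
  rw [cos_arctan, sqrt_one_add_div_sq a hr, one_div_div]

theorem sqrt_cos_two_mul_arctan_div (hr : 0 < r) :
    √(cos (2 * arctan (a / r))) = √(r ^ 2 - a ^ 2) / √(a ^ 2 + r ^ 2) := by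
  have hpos : 0 < a ^ 2 + r ^ 2 := by positivity
  have hcos2 : cos (2 * arctan (a / r)) = (r ^ 2 - a ^ 2) / (a ^ 2 + r ^ 2) := by
    rw [cos_two_mul, cos_arctan_div a hr, div_pow, sq_sqrt hpos.le]
    field_simp
    ring
  rw [hcos2, sqrt_div' _ hpos.le]

end ArctanDiv

theorem sl2r_h2like_translation_curve_through_point_general
    (a b c : ℝ)
    (h1 : a ^ 2 < b ^ 2 + c ^ 2) (h2 : b ^ 2 + c ^ 2 < 1 + a ^ 2)
    (n α lam k s : ℝ)
    (hn : n = Real.sqrt (a ^ 2 + b ^ 2 + c ^ 2))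
    (hα : α = Real.arctan (a / Real.sqrt (b ^ 2 + c ^ 2)))
    (hcosl : Real.cos lam = b / Real.sqrt (b ^ 2 + c ^ 2))
    (hsinl : Real.sin lam = c / Real.sqrt (b ^ 2 + c ^ 2))
    (hk : k = Real.sqrt (Real.cos (2 * α)))
    (hs : s = _root_.artanh (n * k) / k) :
    Real.sin α = a / n ∧
    Real.cos α = Real.sqrt (b ^ 2 + c ^ 2) / n ∧
    k = Real.sqrt (b ^ 2 + c ^ 2 - a ^ 2) / n ∧
    ((Real.tanh (s * k) / k * Real.sin α,
      Real.tanh (s * k) / k * (Real.cos α * Real.cos lam),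
      Real.tanh (s * k) / k * (Real.cos α * Real.sin lam)) : ℝ × ℝ × ℝ) = (a, b, c) := by
  set r := √(b ^ 2 + c ^ 2)
  have hr : 0 < r := sqrt_pos.mpr (by nlinarith)
  have hrsq : r ^ 2 = b ^ 2 + c ^ 2 := sq_sqrt (by positivity)
  have hn' : n = √(a ^ 2 + r ^ 2) := by rw [hn, hrsq, add_assoc]
  have hnpos : 0 < n := hn' ▸ sqrt_pos.mpr (by positivity)
  have hkval : k = √(b ^ 2 + c ^ 2 - a ^ 2) / n := by
    rw [hk, hα, sqrt_cos_two_mul_arctan_div a hr, ← hn', hrsq]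
  have hnk : n * k = √(b ^ 2 + c ^ 2 - a ^ 2) := by
    rw [hkval, mul_div_cancel₀ _ hnpos.ne']
  have hkpos : 0 < k := pos_of_mul_pos_right (hnk ▸ sqrt_pos.mpr (by linarith)) hnpos.le
  have hnk_mem : n * k ∈ Ioo (-1) 1 := by
    rw [hnk]
    exact ⟨by linarith [sqrt_nonneg (b ^ 2 + c ^ 2 - a ^ 2)],
      (sqrt_lt' one_pos).mpr (by linarith)⟩
  have hradius : tanh (s * k) / k = n := hs ▸ tanh_artanh_mul_div_mul_div hkpos hnk_mem
  have hsin : sin α = a / n := by rw [hα, sin_arctan_div a hr, hn']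
  have hcos : cos α = r / n := by rw [hα, cos_arctan_div a hr, hn']
  refine ⟨hsin, hcos, hkval, ?_⟩
  rw [hradius, hsin, hcos, hcosl, hsinl]
  ext <;> field_simp

/-- The H²-like translation curve of the SL(2,ℝ)-tilde geometry with parameters
`(α, λ)` passes through the point with inhomogeneous coordinates `(a,b,c)` at
translation arc-length parameter `s = artanh(n·k)/k`, where `n = √(a²+b²+c²)`
and `k = √(cos 2α) = √(b²+c²−a²)/n`. -/
theorem sl2r_h2like_translation_curve_through_point
    (a b c : ℝ) (hbc : (b, c) ≠ ((0 : ℝ), (0 : ℝ)))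
    (h1 : a ^ 2 < b ^ 2 + c ^ 2) (h2 : b ^ 2 + c ^ 2 < 1 + a ^ 2)
    (n α lam k s : ℝ)
    (hn : n = Real.sqrt (a ^ 2 + b ^ 2 + c ^ 2))
    (hα : α = Real.arctan (a / Real.sqrt (b ^ 2 + c ^ 2)))
    (hcosl : Real.cos lam = b / Real.sqrt (b ^ 2 + c ^ 2))
    (hsinl : Real.sin lam = c / Real.sqrt (b ^ 2 + c ^ 2))
    (hk : k = Real.sqrt (Real.cos (2 * α)))
    (hs : s = _root_.artanh (n * k) / k) :
    Real.sin α = a / n ∧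
    Real.cos α = Real.sqrt (b ^ 2 + c ^ 2) / n ∧
    k = Real.sqrt (b ^ 2 + c ^ 2 - a ^ 2) / n ∧
    ((Real.tanh (s * k) / k * Real.sin α,
      Real.tanh (s * k) / k * (Real.cos α * Real.cos lam),
      Real.tanh (s * k) / k * (Real.cos α * Real.sin lam)) : ℝ × ℝ × ℝ) = (a, b, c) :=
  sl2r_h2like_translation_curve_through_point_general a b c h1 h2 n α lam k s hn hα hcosl hsinl hk
    hs
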